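/- Suppose m(S) ∈ [0, √(2S/C)] satisfies the FOC (S/σ)·φ((θ(S)−m(S))/σ) = C·m(S). Then for every ε > 0 there exists S₀ such that for all S > S₀, any such m(S) has |θ(S) − m(S)| ≥ ε. -/
import Mathlib


open MeasureTheory Filter Set

/-- Standard normal probability density function. -/
noncomputable def stdphi (z : ℝ) : ℝ := (Real.sqrt (2 * Real.pi))⁻¹ * Real.exp (-z ^ 2 / 2)

/-- Standard normal cumulative distribution function. -/
noncomputable def stdPhi (x : ℝ) : ℝ := ∫ t in Set.Iic x, stdphi t

lemma stdphi_pos (z : ℝ) : 0 < stdphi z := by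
  unfold stdphi
  have h : 0 < Real.sqrt (2 * Real.pi) := Real.sqrt_pos.mpr (by positivity)
  positivity

lemma stdphi_anti {a b : ℝ} (h : |a| ≤ |b|) : stdphi b ≤ stdphi a := by
  unfold stdphi
  have hc : 0 ≤ (Real.sqrt (2 * Real.pi))⁻¹ := by positivity
  apply mul_le_mul_of_nonneg_left _ hc
  apply Real.exp_le_exp.mpr
  have : a ^ 2 ≤ b ^ 2 := by
    rw [← sq_abs a, ← sq_abs b]
    exact pow_le_pow_left₀ (abs_nonneg a) h 2
  linarith

/-- For every ε > 0, for all large enough `S`, any `m ∈ [0, √(2S/C)]` satisfying the FOC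
`(S/σ)·φ((θ(S)−m)/σ) = C·m` must have `|θ(S) − m| ≥ ε`; i.e. the gap between the
threshold and the best response is unbounded as `S → ∞`. -/
theorem stmt10 (C σ : ℝ) (hC : 0 < C) (hσ : 0 < σ) (θ : ℝ → ℝ) :
    ∀ ε > (0 : ℝ), ∃ S₀ : ℝ, ∀ S > S₀, ∀ m : ℝ,
      0 ≤ m → m ≤ Real.sqrt (2 * S / C) →
      S / σ * stdphi ((θ S - m) / σ) = C * m →
      ε ≤ |θ S - m| := by
  intro ε hε
  set d := stdphi (ε / σ) with hd
  have hd0 : 0 < d := stdphi_pos _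
  refine ⟨max 1 (2 * C * σ ^ 2 / d ^ 2), fun S hS m hm0 hm1 hfoc => ?_⟩
  have hS1 : (1 : ℝ) < S := lt_of_le_of_lt (le_max_left _ _) hS
  have hS0 : (0 : ℝ) < S := by linarith
  by_contra h
  push_neg at h
  have h1 : d ≤ stdphi ((θ S - m) / σ) := by
    apply stdphi_anti
    rw [abs_div, abs_div, abs_of_pos hσ, abs_of_pos hε]
    gcongr
  have hphi : stdphi ((θ S - m) / σ) = C * m * σ / S := by
    field_simp at hfoc ⊢
    linarith
  have hsq : (Real.sqrt (2 * S / C)) ^ 2 = 2 * S / C :=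
    Real.sq_sqrt (by positivity)
  have h2 : d ≤ C * σ * Real.sqrt (2 * S / C) / S := by
    rw [hphi] at h1
    calc d ≤ C * m * σ / S := h1
      _ ≤ C * σ * Real.sqrt (2 * S / C) / S := by
          have hnum : C * m * σ ≤ C * σ * Real.sqrt (2 * S / C) := by
            nlinarith [mul_le_mul_of_nonneg_left hm1 (by positivity : (0:ℝ) ≤ C * σ)]
          gcongr
  have key : (C * σ * Real.sqrt (2 * S / C) / S) ^ 2 = 2 * C * σ ^ 2 / S := by
    rw [div_pow, mul_pow, hsq]
    field_simp
  have h3 : d ^ 2 ≤ 2 * C * σ ^ 2 / S := by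
    rw [← key]
    exact pow_le_pow_left₀ hd0.le h2 2
  have h4 : S ≤ 2 * C * σ ^ 2 / d ^ 2 := by
    have h3' := (le_div_iff₀ hS0).mp h3
    rw [le_div_iff₀ (pow_pos hd0 2)]
    linarith
  have h5 : 2 * C * σ ^ 2 / d ^ 2 < S := lt_of_le_of_lt (le_max_right _ _) hS
  linarith
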